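/- arXiv:1001.1639 — 2 statements merged into one kernel-verified Lean document; each statement's English description precedes it below -/
import Mathlib

section
/- O_E[N]^G is the unique maximal O_K-order in the commutative K-algebra H = E[N]^G; equivalently, O_E[N]^G equals the integral closure of O_K in E[N]^G. -/
/-! Common setting: `K` a `p`-adic field, `L/K` finite separable with Galois
closure `E/K` (realised as an intermediate field of `E`), `G = Gal(E/K)`,
`G' = fixingSubgroup L`, `X = G ⧸ G'`, `λ` the left-translation embedding,
`N` a regular subgroup of `Perm X` normalised by `λ(G)` (given abstractly via an
injective `ι : N →* Perm X` together with the conjugation action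
`c : G →* MulAut N`), and `H = E[N]^G` the Greither–Pareigis Hopf algebra. -/

noncomputable section

variable (p : ℕ) [Fact p.Prime]
variable (K E : Type) [Field K] [Field E]
  [Algebra ℚ_[p] K] [FiniteDimensional ℚ_[p] K]
  [Algebra ℚ_[p] E] [FiniteDimensional ℚ_[p] E]
  [Algebra ℤ_[p] E] [IsScalarTower ℤ_[p] ℚ_[p] E]
  [Algebra K E] [IsScalarTower ℚ_[p] K E] [FiniteDimensional K E] [IsGalois K E]
  (L : IntermediateField K E)
  (N : Type) [CommGroup N] [Fintype N]
  (ι : N →* Equiv.Perm ((E ≃ₐ[K] E) ⧸ L.fixingSubgroup))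
  (c : (E ≃ₐ[K] E) →* MulAut N)

/-- The left-translation embedding `λ : G → Perm (G ⧸ G')`. -/
def lam : (E ≃ₐ[K] E) →* Equiv.Perm ((E ≃ₐ[K] E) ⧸ L.fixingSubgroup) :=
  MulAction.toPermHom _ _

/-- The semilinear action of `g ∈ G` on the group algebra `E[N]`:
on coefficients as the Galois automorphism `g`, on group elements by
conjugation through `λ` (encoded by the `MulAut`-valued homomorphism `c`). -/
def galTwist (g : E ≃ₐ[K] E) (z : MonoidAlgebra E N) : MonoidAlgebra E N :=
  MonoidAlgebra.ofCoeff (Finsupp.mapDomain (c g) (Finsupp.mapRange g (map_zero g) z.coeff))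

/-- A representative `σₙ ∈ G` of the coset `(ι n)⁻¹ (1·G') ∈ X`. -/
def sigma (n : N) : E ≃ₐ[K] E :=
  Quotient.out ((ι n)⁻¹
    (QuotientGroup.mk (1 : E ≃ₐ[K] E) : (E ≃ₐ[K] E) ⧸ L.fixingSubgroup))

/-- The Hopf–Galois action of the Greither–Pareigis Hopf algebra on `E` (it
restricts to the action on `L`): `(Σ cₙ n) · x = Σ cₙ σₙ(x)`. -/
def hopfAct (z : MonoidAlgebra E N) (x : E) : E :=
  z.coeff.sum fun n cn => cn * sigma K E L N ι n x

/-- The valuation ring `O_L`, as a subset of `E`: the elements of `L` integral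
over `ℤ_[p]`. -/
def OL : Set E := {x : E | x ∈ L ∧ x ∈ integralClosure ℤ_[p] E}

/-- The set of `G`-fixed points of `E[N]`, i.e. the Hopf algebra `H = E[N]^G`. -/
def Hset : Set (MonoidAlgebra E N) := {z | ∀ g : E ≃ₐ[K] E, galTwist K E N c g z = z}

/-- The associated order `A_H = {h ∈ H | h · O_L ⊆ O_L}`. -/
def AH : Set (MonoidAlgebra E N) :=
  {z | z ∈ Hset K E N c ∧ ∀ x ∈ OL p K E L, hopfAct K E L N ι z x ∈ OL p K E L}

/-- `O_E[N]^G`: the `G`-fixed elements of the integral group ring. -/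
def OEN : Set (MonoidAlgebra E N) :=
  {z | z ∈ Hset K E N c ∧ ∀ n : N, z.coeff n ∈ integralClosure ℤ_[p] E}

/-- The integral closure of `O_K` in `H` (equivalently, of `ℤ_[p]`),
i.e. the unique maximal order of the commutative separable algebra `H`. -/
def MaxOrd : Set (MonoidAlgebra E N) :=
  {z | z ∈ Hset K E N c ∧ IsIntegral ℤ_[p] z}

/-- `O_L` is a free `A_H`-module (necessarily of rank one). -/
def IsFreeRankOne : Prop :=
  ∃ b ∈ OL p K E L, ∀ x ∈ OL p K E L,
    ∃! z : MonoidAlgebra E N, z ∈ AH p K E L N ι c ∧ hopfAct K E L N ι z b = x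

end

/-! Since `|N| = [L:K]` is a unit in `ℤ_[p]`, `O_E[N]` is already the integral closure of `ℤ_[p]`
in the whole group algebra `E[N]`, and both sides of the claim are its intersection with `H`.
Group elements have finite order, so integral coefficients give an integral element. Conversely,
every character `φ : N → Ωˣ` (`Ω` an algebraic closure of `E`) extends to an algebra map
`E[N] → Ω`, which preserves integrality, and Fourier inversion
`|N| • zₙ = ∑ φ, φ(n)⁻¹ φ(z)` shows that `|N| • zₙ`, hence `zₙ`, is integral. -/

theorem CommGroup.sum_monoidHom_apply_eq_ite {G F : Type*} [CommGroup G] [Finite G] [Field F]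
    [HasEnoughRootsOfUnity F (Monoid.exponent G)] [Fintype (G →* Fˣ)] [DecidableEq G] (g : G) :
    ∑ φ : G →* Fˣ, ((φ g : Fˣ) : F) = if g = 1 then (Nat.card G : F) else 0 := by
  classical
  have heval := sum_hom_units ((Units.coeHom F).comp (MonoidHom.eval g))
  have hone : (Units.coeHom F).comp (MonoidHom.eval g) = 1 ↔ g = 1 := by
    refine ⟨fun h => ?_, fun h => by ext φ; simp [h]⟩
    by_contra hg
    obtain ⟨φ, hφ⟩ := CommGroup.exists_apply_ne_one_of_hasEnoughRootsOfUnity G F hg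
    exact hφ (Units.ext (DFunLike.congr_fun h φ))
  simp only [MonoidHom.coe_comp, Function.comp_apply, MonoidHom.eval_apply_apply,
    Units.coeHom_apply] at heval
  rw [heval, ← Nat.card_eq_fintype_card, CommGroup.card_monoidHom_of_hasEnoughRootsOfUnity,
    Nat.cast_ite, Nat.cast_zero]
  exact if_congr hone rfl rfl

namespace MonoidAlgebra

variable {R A N : Type*} [CommRing R] [CommGroup N] [Finite N]

theorem sum_monoidHom_mul_lift_eq {F : Type*} [CommRing A] [Field F] [Algebra A F]
    [HasEnoughRootsOfUnity F (Monoid.exponent N)] [Fintype (N →* Fˣ)]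
    (z : MonoidAlgebra A N) (n : N) :
    ∑ φ : N →* Fˣ, ((φ n⁻¹ : Fˣ) : F) * lift A F N ((Units.coeHom F).comp φ) z
      = Nat.card N * algebraMap A F (z.coeff n) := by
  classical
  induction z using MonoidAlgebra.induction_linear with
  | zero => simp
  | add x y hx hy =>
    simp only [map_add, mul_add, Finset.sum_add_distrib, coeff_add, Finsupp.add_apply, hx, hy]
  | single m r =>
    have hchar (φ : N →* Fˣ) :
        ((φ n⁻¹ : Fˣ) : F) * lift A F N ((Units.coeHom F).comp φ) (single m r)
          = algebraMap A F r * ((φ (n⁻¹ * m) : Fˣ) : F) := by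
      simp [lift_single, Algebra.smul_def, mul_left_comm]
    simp only [hchar, ← Finset.mul_sum, CommGroup.sum_monoidHom_apply_eq_ite, inv_mul_eq_one,
      coeff_single, Finsupp.single_apply]
    by_cases hnm : n = m
    · simp [hnm, mul_comm]
    · simp [hnm, Ne.symm hnm]

theorem isIntegral_of_forall_isIntegral_coeff [CommRing A] [Algebra R A] {z : MonoidAlgebra A N}
    (h : ∀ n, IsIntegral R (z.coeff n)) : IsIntegral R z := by
  rw [← sum_coeff_single z]
  refine Subalgebra.sum_mem (integralClosure R _) fun n _ => ?_
  have hunit : IsIntegral R (single n (1 : A)) :=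
    IsIntegral.of_pow Nat.card_pos (by
      rw [single_pow, pow_card_eq_one', one_pow]; exact isIntegral_one)
  have hcoeff : IsIntegral R (algebraMap A (MonoidAlgebra A N) (z.coeff n)) :=
    (h n).map (IsScalarTower.toAlgHom R A (MonoidAlgebra A N))
  show IsIntegral R _
  simpa [algebraMap_apply] using hcoeff.mul hunit

theorem isIntegral_coeff_of_isIntegral {E : Type*} [Field E] [Algebra R E]
    (hN : IsUnit (Nat.card N : R)) {z : MonoidAlgebra E N} (hz : IsIntegral R z) (n : N) :
    IsIntegral R (z.coeff n) := by
  let Ω := AlgebraicClosure E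
  have : NeZero (Monoid.exponent N : Ω) := by
    refine ⟨fun h => ?_⟩
    have hcard : (Nat.card N : Ω) ≠ 0 := by
      simpa using (hN.map (algebraMap R Ω)).ne_zero
    obtain ⟨k, hk⟩ := Group.exponent_dvd_nat_card (G := N)
    exact hcard (by rw [hk, Nat.cast_mul, h, zero_mul])
  have : Finite (N →* Ωˣ) := Finite.of_equiv N
    (CommGroup.monoidHom_mulEquiv_of_hasEnoughRootsOfUnity N Ω).some.toEquiv.symm
  let := Fintype.ofFinite (N →* Ωˣ)
  have hsum : IsIntegral R (algebraMap E Ω (z.coeff n * Nat.card N)) := by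
    rw [map_mul, map_natCast, mul_comm, ← sum_monoidHom_mul_lift_eq]
    refine Subalgebra.sum_mem (integralClosure R Ω) fun φ _ => mul_mem ?_ ?_
    · exact IsIntegral.of_pow Nat.card_pos (by
        rw [← Units.val_pow_eq_pow_val, ← map_pow, pow_card_eq_one', map_one, Units.val_one]
        exact isIntegral_one)
    · exact hz.map ((lift E Ω N ((Units.coeHom Ω).comp φ)).restrictScalars R)
  refine IsIntegral.of_mul_unit (r := hN.unit⁻¹.val) ?_ ((isIntegral_algHom_iff
    (IsScalarTower.toAlgHom R E Ω) (algebraMap E Ω).injective).mp hsum)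
  rw [← map_natCast (algebraMap R E), ← map_mul, hN.val_inv_mul, map_one]

theorem isIntegral_iff_forall_isIntegral_coeff {E : Type*} [Field E] [Algebra R E]
    (hN : IsUnit (Nat.card N : R)) {z : MonoidAlgebra E N} :
    IsIntegral R z ↔ ∀ n, IsIntegral R (z.coeff n) :=
  ⟨isIntegral_coeff_of_isIntegral hN, isIntegral_of_forall_isIntegral_coeff⟩

end MonoidAlgebra

theorem PadicInt.isUnit_natCast_iff {p : ℕ} [hp : Fact p.Prime] {n : ℕ} :
    IsUnit (n : ℤ_[p]) ↔ ¬ p ∣ n := by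
  rw [PadicInt.isUnit_iff, PadicInt.norm_natCast_eq_one_iff, hp.out.coprime_iff_not_dvd]

theorem statement8_general
    (p : ℕ) [Fact p.Prime]
    (K E : Type) [Field K] [Field E]
    [Algebra ℤ_[p] E]
    [Algebra K E] [IsGalois K E]
    (L : IntermediateField K E)
    (hdeg : ¬ (p ∣ Module.finrank K L))
    (N : Type) [CommGroup N] [Fintype N]
    (hcard : Nat.card N = Nat.card ((E ≃ₐ[K] E) ⧸ L.fixingSubgroup))
    (c : (E ≃ₐ[K] E) →* MulAut N) :
    OEN p K E N c = MaxOrd p K E N c := by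
  have hunit : IsUnit (Nat.card N : ℤ_[p]) := by
    rwa [hcard, ← Subgroup.index, ← IntermediateField.finrank_eq_fixingSubgroup_index,
      PadicInt.isUnit_natCast_iff]
  ext z
  exact and_congr_right fun _ => (MonoidAlgebra.isIntegral_iff_forall_isIntegral_coeff hunit).symm

/-- if `p ∤ [L:K]` then `O_E[N]^G` is the unique maximal
`O_K`-order in `H = E[N]^G`, i.e. it equals the integral closure of `O_K`
in `E[N]^G`. -/
theorem statement8
    (p : ℕ) [Fact p.Prime]
    (K E : Type) [Field K] [Field E]
    [Algebra ℚ_[p] K] [FiniteDimensional ℚ_[p] K]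
    [Algebra ℚ_[p] E] [FiniteDimensional ℚ_[p] E]
    [Algebra ℤ_[p] E] [IsScalarTower ℤ_[p] ℚ_[p] E]
    [Algebra K E] [IsScalarTower ℚ_[p] K E] [FiniteDimensional K E] [IsGalois K E]
    (L : IntermediateField K E)
    (hclosure : IntermediateField.normalClosure K L E = ⊤)
    (hdeg : ¬ (p ∣ Module.finrank K L))
    (N : Type) [CommGroup N] [Fintype N]
    (ι : N →* Equiv.Perm ((E ≃ₐ[K] E) ⧸ L.fixingSubgroup))
    (hι : Function.Injective ι)
    (hcard : Nat.card N = Nat.card ((E ≃ₐ[K] E) ⧸ L.fixingSubgroup))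
    (htrans : ∀ x y : (E ≃ₐ[K] E) ⧸ L.fixingSubgroup, ∃ n : N, ι n x = y)
    (c : (E ≃ₐ[K] E) →* MulAut N)
    (hc : ∀ (g : E ≃ₐ[K] E) (n : N),
      ι (c g n) = lam K E L g * ι n * (lam K E L g)⁻¹) :
    OEN p K E N c = MaxOrd p K E N c :=
  statement8_general p K E L hdeg N hcard c
end

section
/- A_H = O_E[N]^G, and this is the unique maximal O_K-order in H (the integral closure of O_K in H). -/
/-!
Write `𝒪` for the integral closure of `ℤ_[p]` in `H`; both equalities follow from
`O_E[N]^G ⊆ A_H ⊆ 𝒪 ⊆ O_E[N]^G`.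

* `O_E[N]^G ⊆ A_H`: every `σₙ` preserves integrality, and `G`-invariance of `h` makes `h · x`
  fixed by `G'`, hence in `L`, for `x ∈ L`.
* `A_H ⊆ 𝒪`: `A_H` is a ring acting on the finitely generated `ℤ_[p]`-module `O_L`, faithfully
  because `O_L` spans `L` and the `σₙ|_L` are linearly independent (Dedekind). So `A_H` embeds
  into `End(O_L)`, all of whose elements are integral.
* `𝒪 ⊆ O_E[N]^G`: the coefficient `zₙ` is `|N|⁻¹` times the trace of left multiplication by
  `z n⁻¹` on `E[N]`. Traces of integral endomorphisms are integral, being sums of roots of a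
  monic integral polynomial, and `|N| = [L:K]` is a unit in `ℤ_[p]`.
-/

open MonoidAlgebra

open Polynomial in
theorem Matrix.isIntegral_trace {R F n : Type*} [CommRing R] [Field F] [Algebra R F]
    [Fintype n] [DecidableEq n] {M : Matrix n n F} (hM : IsIntegral R M) :
    IsIntegral R M.trace := by
  let φ := IsScalarTower.toAlgHom R F (AlgebraicClosure F)
  obtain ⟨P, hPm, hP⟩ := hM.map φ.mapMatrix
  rw [← isIntegral_algebraMap_iff (algebraMap F (AlgebraicClosure F)).injective,
    AddMonoidHom.map_trace, Matrix.trace_eq_sum_roots_charpoly]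
  refine IsIntegral.multiset_sum fun μ hμ => ⟨P, hPm, ?_⟩
  have hspec : μ ∈ spectrum _ (φ.mapMatrix M) :=
    Matrix.mem_spectrum_iff_isRoot_charpoly.mpr (isRoot_of_mem_roots hμ)
  have := spectrum.subset_polynomial_aeval _ (P.map (algebraMap R _)) ⟨μ, hspec, rfl⟩
  rw [aeval_map_algebraMap, aeval_def, hP, spectrum.mem_iff, sub_zero] at this
  rw [← eval_map]
  by_contra h
  exact this ((Ne.isUnit h).map _)

theorem MonoidAlgebra.isIntegral_coeff {R F G : Type*} [CommRing R] [Field F] [Algebra R F]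
    [CommGroup G] [Fintype G] (hG : IsUnit (Fintype.card G : R)) {z : MonoidAlgebra F G}
    (hz : IsIntegral R z) (g : G) : IsIntegral R (z.coeff g) := by
  classical
  have hsingle : IsIntegral R (single g⁻¹ (1 : F)) := by
    refine IsIntegral.of_pow (Fintype.card_pos (α := G)) ?_
    rw [single_pow, inv_pow, pow_card_eq_one, inv_one, one_pow, ← one_def]
    exact isIntegral_one
  have htrace : (Algebra.leftMulMatrix (basis G F) (z * single g⁻¹ 1)).trace
      = (Fintype.card G : F) * z.coeff g := by
    rw [Matrix.trace, ← nsmul_eq_mul, ← Finset.card_univ, ← Finset.sum_const]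
    refine Finset.sum_congr rfl fun i _ => ?_
    rw [Matrix.diag_apply, Algebra.leftMulMatrix_eq_repr_mul]
    change (z * single g⁻¹ 1 * single i 1).coeff i = _
    simp
  obtain ⟨u, hu⟩ := hG.exists_left_inv
  have hcoeff : z.coeff g = algebraMap R F u * ((Fintype.card G : F) * z.coeff g) := by
    rw [← mul_assoc, ← map_natCast (algebraMap R F), ← map_mul, hu, map_one, one_mul]
  rw [hcoeff, ← htrace]
  exact isIntegral_algebraMap.mul
    (Matrix.isIntegral_trace ((hz.mul hsingle).map ((Algebra.leftMulMatrix _).restrictScalars R)))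

section HopfAction

variable {K E : Type} [Field K] [Field E] [Algebra K E] {L : IntermediateField K E}
  {N : Type} [CommGroup N] {ι : N →* Equiv.Perm ((E ≃ₐ[K] E) ⧸ L.fixingSubgroup)}
  {c : (E ≃ₐ[K] E) →* MulAut N}

variable (L) in
theorem apply_eq_apply_iff_mk_eq {a b : E ≃ₐ[K] E} :
    (∀ x ∈ L, a x = b x) ↔ (a : (E ≃ₐ[K] E) ⧸ L.fixingSubgroup) = b := by
  rw [QuotientGroup.eq, IntermediateField.mem_fixingSubgroup_iff]
  refine forall₂_congr fun x _ => ?_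
  rw [AlgEquiv.mul_apply, AlgEquiv.aut_inv, AlgEquiv.symm_apply_eq, eq_comm]

theorem mk_sigma (n : N) :
    (sigma K E L N ι n : (E ≃ₐ[K] E) ⧸ L.fixingSubgroup)
      = (ι n)⁻¹ ((1 : E ≃ₐ[K] E) : (E ≃ₐ[K] E) ⧸ L.fixingSubgroup) :=
  Quotient.out_eq _

theorem sigma_one_apply {x : E} (hx : x ∈ L) : sigma K E L N ι 1 x = x :=
  (apply_eq_apply_iff_mk_eq L (b := 1)).mpr (by rw [mk_sigma, map_one, inv_one]; rfl) x hx

theorem apply_sigma_apply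
    (hc : ∀ (g : E ≃ₐ[K] E) (n : N), ι (c g n) = lam K E L g * ι n * (lam K E L g)⁻¹)
    {g : E ≃ₐ[K] E} {m : N} (hg : (g : (E ≃ₐ[K] E) ⧸ L.fixingSubgroup) = sigma K E L N ι m)
    (k : N) {x : E} (hx : x ∈ L) :
    g (sigma K E L N ι k x) = sigma K E L N ι (m * c g k) x := by
  rw [← AlgEquiv.mul_apply]
  refine (apply_eq_apply_iff_mk_eq L).mpr ?_ x hx
  have hlam : (lam K E L g)⁻¹ g = ((1 : E ≃ₐ[K] E) : (E ≃ₐ[K] E) ⧸ L.fixingSubgroup) := by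
    rw [← map_inv]
    exact congrArg _ (inv_mul_cancel g)
  calc ((g * sigma K E L N ι k : E ≃ₐ[K] E) : (E ≃ₐ[K] E) ⧸ L.fixingSubgroup)
      = lam K E L g ((ι k)⁻¹ ((lam K E L g)⁻¹ g)) := by rw [hlam, ← mk_sigma]; rfl
    _ = (ι (c g k))⁻¹ g := by rw [hc]; simp [mul_inv_rev]
    _ = (ι (c g k))⁻¹ ((ι m)⁻¹ ((1 : E ≃ₐ[K] E) : (E ≃ₐ[K] E) ⧸ L.fixingSubgroup)) := by
      rw [hg, mk_sigma]
    _ = sigma K E L N ι (m * c g k) := by rw [mk_sigma, map_mul, mul_inv_rev]; rfl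

theorem apply_coeff_of_mem_Hset {z : MonoidAlgebra E N} (hz : z ∈ Hset K E N c)
    (g : E ≃ₐ[K] E) (n : N) : g (z.coeff n) = z.coeff (c g n) := by
  conv_rhs => rw [← hz g]
  rw [galTwist, coeff_ofCoeff, ← MulEquiv.coe_toEquiv, Finsupp.mapDomain_equiv_apply]
  simp

theorem hopfAct_single (n : N) (r x : E) :
    hopfAct K E L N ι (single n r) x = r * sigma K E L N ι n x := by
  rw [hopfAct, coeff_single, Finsupp.sum_single_index (zero_mul _)]

theorem hopfAct_one {x : E} (hx : x ∈ L) : hopfAct K E L N ι 1 x = x := by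
  rw [one_def, hopfAct_single, one_mul, sigma_one_apply hx]

variable [Fintype N]

theorem hopfAct_eq_sum (z : MonoidAlgebra E N) (x : E) :
    hopfAct K E L N ι z x = ∑ n, z.coeff n * sigma K E L N ι n x :=
  Finsupp.sum_fintype _ _ fun _ => zero_mul _

theorem hopfAct_add (z w : MonoidAlgebra E N) (x : E) :
    hopfAct K E L N ι (z + w) x = hopfAct K E L N ι z x + hopfAct K E L N ι w x := by
  simp only [hopfAct_eq_sum, MonoidAlgebra.coeff_add, Finsupp.coe_add, Pi.add_apply, add_mul,
    Finset.sum_add_distrib]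

theorem hopfAct_add_right (z : MonoidAlgebra E N) (x y : E) :
    hopfAct K E L N ι z (x + y) = hopfAct K E L N ι z x + hopfAct K E L N ι z y := by
  simp only [hopfAct_eq_sum, map_add, mul_add, Finset.sum_add_distrib]

theorem hopfAct_mul
    (hc : ∀ (g : E ≃ₐ[K] E) (n : N), ι (c g n) = lam K E L g * ι n * (lam K E L g)⁻¹)
    (z : MonoidAlgebra E N) {w : MonoidAlgebra E N} (hw : w ∈ Hset K E N c) {x : E}
    (hx : x ∈ L) :
    hopfAct K E L N ι (z * w) x = hopfAct K E L N ι z (hopfAct K E L N ι w x) := by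
  induction z using MonoidAlgebra.induction_linear with
  | zero => simp only [zero_mul, hopfAct, MonoidAlgebra.coeff_zero, Finsupp.sum_zero_index]
  | add z₁ z₂ h₁ h₂ => rw [add_mul, hopfAct_add, hopfAct_add, h₁, h₂]
  | single m r =>
    set s := sigma K E L N ι m
    calc hopfAct K E L N ι (single m r * w) x
        = ∑ k, r * w.coeff k * sigma K E L N ι (m * k) x := by
          rw [hopfAct_eq_sum, ← Equiv.sum_comp (Equiv.mulLeft m)]
          simp only [Equiv.coe_mulLeft, coeff_single_mul_mul]
      _ = ∑ k, r * w.coeff (c s k) * sigma K E L N ι (m * c s k) x :=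
          (Equiv.sum_comp (c s).toEquiv fun k => r * w.coeff k * sigma K E L N ι (m * k) x).symm
      _ = hopfAct K E L N ι (single m r) (hopfAct K E L N ι w x) := by
          rw [hopfAct_single, hopfAct_eq_sum, map_sum, Finset.mul_sum]
          refine Finset.sum_congr rfl fun k _ => ?_
          rw [map_mul, apply_coeff_of_mem_Hset hw, apply_sigma_apply hc rfl k hx, mul_assoc]

/-- Dedekind's independence of characters: the embeddings `σₙ|_L` are pairwise distinct because
`N` acts regularly on `G ⧸ G'`. -/
theorem eq_zero_of_hopfAct_eq_zero
    (hcard : Nat.card N = Nat.card ((E ≃ₐ[K] E) ⧸ L.fixingSubgroup))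
    (htrans : ∀ x y : (E ≃ₐ[K] E) ⧸ L.fixingSubgroup, ∃ n : N, ι n x = y)
    {z : MonoidAlgebra E N} (hz : ∀ x ∈ L, hopfAct K E L N ι z x = 0) : z = 0 := by
  have hfree : Function.Injective fun n : N => ι n (1 : E ≃ₐ[K] E) :=
    (Function.Surjective.bijective_of_nat_card_le (htrans _) hcard.le).injective
  let χ : N → (L →* E) := fun n => ((sigma K E L N ι n : E →+* E).comp (algebraMap L E)).toMonoidHom
  have hχ : Function.Injective χ := by
    intro n m h
    have h' := (apply_eq_apply_iff_mk_eq L).mp fun x hx => DFunLike.congr_fun h ⟨x, hx⟩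
    rw [mk_sigma, mk_sigma, ← map_inv, ← map_inv] at h'
    exact inv_injective (hfree h')
  have hcoeff := Fintype.linearIndependent_iff.mp ((linearIndependent_monoidHom L E).comp χ hχ)
    z.coeff <| funext fun x => by
      simpa [hopfAct_eq_sum, χ] using hz x x.2
  ext n
  exact hcoeff n

variable [FiniteDimensional K E] [IsGalois K E]

theorem hopfAct_mem
    (hc : ∀ (g : E ≃ₐ[K] E) (n : N), ι (c g n) = lam K E L g * ι n * (lam K E L g)⁻¹)
    {z : MonoidAlgebra E N} (hz : z ∈ Hset K E N c) {x : E} (hx : x ∈ L) :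
    hopfAct K E L N ι z x ∈ L := by
  suffices h : hopfAct K E L N ι z x ∈ IntermediateField.fixedField L.fixingSubgroup by
    rwa [IsGalois.fixedField_fixingSubgroup] at h
  rw [IntermediateField.mem_fixedField_iff]
  intro g hg
  have hg' : (g : (E ≃ₐ[K] E) ⧸ L.fixingSubgroup) = sigma K E L N ι 1 := by
    rw [mk_sigma, map_one, inv_one, Equiv.Perm.one_apply, QuotientGroup.eq]
    simpa using inv_mem hg
  rw [hopfAct_eq_sum, map_sum]
  refine Fintype.sum_equiv (c g).toEquiv _ _ fun n => ?_
  rw [map_mul, apply_coeff_of_mem_Hset hz, apply_sigma_apply hc hg' n hx, one_mul]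
  rfl

end HopfAction

section PadicIntAlgebra

variable {p : ℕ} [Fact p.Prime] {K E : Type} [Field K] [Field E] [Algebra ℤ_[p] E] [Algebra K E]
  {N : Type} [CommGroup N] [Fintype N]

theorem hopfAct_smul {L : IntermediateField K E}
    (ι : N →* Equiv.Perm ((E ≃ₐ[K] E) ⧸ L.fixingSubgroup)) (r : ℤ_[p]) (z : MonoidAlgebra E N)
    (x : E) : hopfAct K E L N ι (r • z) x = r • hopfAct K E L N ι z x := by
  simp only [hopfAct_eq_sum, MonoidAlgebra.coeff_smul, Finsupp.coe_smul, Pi.smul_apply,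
    smul_mul_assoc, Finset.smul_sum]

theorem hopfAct_algebraMap {L : IntermediateField K E}
    (ι : N →* Equiv.Perm ((E ≃ₐ[K] E) ⧸ L.fixingSubgroup)) (r : ℤ_[p]) {x : E} (hx : x ∈ L) :
    hopfAct K E L N ι (algebraMap ℤ_[p] (MonoidAlgebra E N) r) x = r • x := by
  rw [Algebra.algebraMap_eq_smul_one, hopfAct_smul, hopfAct_one hx]

theorem MaxOrd_subset_OEN (c : (E ≃ₐ[K] E) →* MulAut N) (hp : ¬ p ∣ Fintype.card N) :
    MaxOrd p K E N c ⊆ OEN p K E N c := by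
  have hunit : IsUnit (Fintype.card N : ℤ_[p]) :=
    PadicInt.isUnit_iff.mpr <| PadicInt.norm_natCast_eq_one_iff.mpr <|
      (Nat.Prime.coprime_iff_not_dvd Fact.out).mpr hp
  exact fun z hz => ⟨hz.1, MonoidAlgebra.isIntegral_coeff hunit hz.2⟩

end PadicIntAlgebra

noncomputable section PadicTower

variable {p : ℕ} [Fact p.Prime] {K E : Type} [Field K] [Field E]
  [Algebra ℚ_[p] K] [Algebra ℚ_[p] E] [Algebra ℤ_[p] E] [IsScalarTower ℤ_[p] ℚ_[p] E]
  [Algebra K E] [IsScalarTower ℚ_[p] K E] {L : IntermediateField K E}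
  {N : Type} [CommGroup N] {c : (E ≃ₐ[K] E) →* MulAut N}

variable (p) in
def AlgEquiv.toPadicIntAlgHom (g : E ≃ₐ[K] E) : E →ₐ[ℤ_[p]] E :=
  ((g : E →ₐ[K] E).restrictScalars ℚ_[p]).restrictScalars ℤ_[p]

variable (p L) in
def OLsub : Submodule ℤ_[p] E :=
  (L.restrictScalars ℚ_[p]).toSubalgebra.toSubmodule.restrictScalars ℤ_[p] ⊓
    (integralClosure ℤ_[p] E).toSubmodule

instance [FiniteDimensional ℚ_[p] E] : Module.Finite ℤ_[p] (OLsub p L) :=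
  have := IsIntegralClosure.finite ℤ_[p] ℚ_[p] E (integralClosure ℤ_[p] E)
  Module.Finite.of_injective (Submodule.inclusion inf_le_right) (Submodule.inclusion_injective _)

theorem exists_smul_mem_OLsub [FiniteDimensional ℚ_[p] E] {x : E} (hx : x ∈ L) :
    ∃ d : ℤ_[p], d ≠ 0 ∧ d • x ∈ OLsub p L := by
  obtain ⟨d, hd, hdx⟩ := ((IsFractionRing.isAlgebraic_iff ℤ_[p] ℚ_[p] E).mpr
    (Algebra.IsAlgebraic.isAlgebraic x)).exists_integral_multiple
  exact ⟨d, hd, Submodule.smul_mem _ d (show x ∈ L from hx), hdx⟩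

variable (p c) in
def galTwistAlgHom (g : E ≃ₐ[K] E) : MonoidAlgebra E N →ₐ[ℤ_[p]] MonoidAlgebra E N :=
  (mapDomainAlgHom ℤ_[p] E (c g : N →* N)).comp (mapAlgHom N (g.toPadicIntAlgHom p))

variable (p c) in
def Hsub : Subalgebra ℤ_[p] (MonoidAlgebra E N) :=
  ⨅ g, AlgHom.equalizer (galTwistAlgHom p c g) (AlgHom.id ℤ_[p] _)

variable (p) in
theorem mem_Hsub {z : MonoidAlgebra E N} : z ∈ Hsub p c ↔ z ∈ Hset K E N c := by
  simp only [Hsub, Algebra.mem_iInf, AlgHom.mem_equalizer, AlgHom.id_apply]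
  rfl

variable [Fintype N] {ι : N →* Equiv.Perm ((E ≃ₐ[K] E) ⧸ L.fixingSubgroup)}

theorem hopfAct_smul_right (r : ℤ_[p]) (z : MonoidAlgebra E N) (x : E) :
    hopfAct K E L N ι z (r • x) = r • hopfAct K E L N ι z x := by
  simp only [hopfAct_eq_sum, Finset.smul_sum, ← mul_smul_comm]
  exact Finset.sum_congr rfl fun n _ =>
    congrArg _ (map_smul ((sigma K E L N ι n).toPadicIntAlgHom p) r x)

variable (p ι) in
def hopfActLin : MonoidAlgebra E N →ₗ[ℤ_[p]] E →ₗ[ℤ_[p]] E :=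
  LinearMap.mk₂ ℤ_[p] (hopfAct K E L N ι) hopfAct_add (hopfAct_smul ι) hopfAct_add_right
    hopfAct_smul_right

variable (p) in
def AHsub (hc : ∀ (g : E ≃ₐ[K] E) (n : N), ι (c g n) = lam K E L g * ι n * (lam K E L g)⁻¹) :
    Subalgebra ℤ_[p] (MonoidAlgebra E N) where
  carrier := AH p K E L N ι c
  mul_mem' {z w} hz hw :=
    ⟨(mem_Hsub p).mp (mul_mem ((mem_Hsub p).mpr hz.1) ((mem_Hsub p).mpr hw.1)), fun x hx => by
      rw [hopfAct_mul hc z hw.1 hx.1]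
      exact hz.2 _ (hw.2 x hx)⟩
  add_mem' {z w} hz hw :=
    ⟨(mem_Hsub p).mp (add_mem ((mem_Hsub p).mpr hz.1) ((mem_Hsub p).mpr hw.1)), fun x hx => by
      rw [hopfAct_add]
      exact (OLsub p L).add_mem (hz.2 x hx) (hw.2 x hx)⟩
  algebraMap_mem' r :=
    ⟨(mem_Hsub p).mp ((Hsub p c).algebraMap_mem r), fun x hx => by
      rw [hopfAct_algebraMap ι r hx.1]
      exact (OLsub p L).smul_mem r hx⟩

variable (p) in
def AHsub.toEnd
    (hc : ∀ (g : E ≃ₐ[K] E) (n : N), ι (c g n) = lam K E L g * ι n * (lam K E L g)⁻¹) :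
    AHsub p hc →ₐ[ℤ_[p]] Module.End ℤ_[p] (OLsub p L) :=
  AlgHom.ofLinearMap
    { toFun z := (hopfActLin p ι z).restrict z.2.2
      map_add' z w := by ext; simp [hopfActLin]
      map_smul' r z := by ext; simp [hopfActLin] }
    (by ext x; exact hopfAct_one x.2.1)
    (fun z w => by ext x; exact hopfAct_mul hc z w.2.1 x.2.1)

theorem OEN_subset_AH [FiniteDimensional K E] [IsGalois K E]
    (hc : ∀ (g : E ≃ₐ[K] E) (n : N), ι (c g n) = lam K E L g * ι n * (lam K E L g)⁻¹) :
    OEN p K E N c ⊆ AH p K E L N ι c := by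
  rintro z ⟨hzH, hzint⟩
  refine ⟨hzH, fun x ⟨hxL, hxint⟩ => ⟨hopfAct_mem hc hzH hxL, ?_⟩⟩
  rw [hopfAct_eq_sum]
  exact Subalgebra.sum_mem _ fun n _ =>
    mul_mem (hzint n) (hxint.map ((sigma K E L N ι n).toPadicIntAlgHom p))

variable [FiniteDimensional ℚ_[p] E]

theorem AHsub.toEnd_injective
    (hcard : Nat.card N = Nat.card ((E ≃ₐ[K] E) ⧸ L.fixingSubgroup))
    (htrans : ∀ x y : (E ≃ₐ[K] E) ⧸ L.fixingSubgroup, ∃ n : N, ι n x = y)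
    (hc : ∀ (g : E ≃ₐ[K] E) (n : N), ι (c g n) = lam K E L g * ι n * (lam K E L g)⁻¹) :
    Function.Injective (AHsub.toEnd p hc) := by
  refine (injective_iff_map_eq_zero _).mpr fun z hz =>
    Subtype.ext (eq_zero_of_hopfAct_eq_zero hcard htrans fun x hx => ?_)
  obtain ⟨d, hd, hdx⟩ := exists_smul_mem_OLsub (p := p) hx
  have h0 : hopfAct K E L N ι z (d • x) = 0 :=
    congrArg Subtype.val (LinearMap.congr_fun hz ⟨_, hdx⟩)
  have := Module.IsTorsionFree.trans_faithfulSMul ℤ_[p] ℚ_[p] E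
  rw [hopfAct_smul_right, smul_eq_zero] at h0
  exact h0.resolve_left hd

theorem AH_subset_MaxOrd
    (hcard : Nat.card N = Nat.card ((E ≃ₐ[K] E) ⧸ L.fixingSubgroup))
    (htrans : ∀ x y : (E ≃ₐ[K] E) ⧸ L.fixingSubgroup, ∃ n : N, ι n x = y)
    (hc : ∀ (g : E ≃ₐ[K] E) (n : N), ι (c g n) = lam K E L g * ι n * (lam K E L g)⁻¹) :
    AH p K E L N ι c ⊆ MaxOrd p K E N c := by
  intro z hz
  let z' : AHsub p hc := ⟨z, hz⟩
  have hEnd : IsIntegral ℤ_[p] (AHsub.toEnd p hc z') := Algebra.IsIntegral.isIntegral _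
  have hint : IsIntegral ℤ_[p] z' :=
    (isIntegral_algHom_iff _ (AHsub.toEnd_injective (p := p) hcard htrans hc)).mp hEnd
  exact ⟨hz.1, hint.map (AHsub p hc).val⟩

end PadicTower

theorem statement9_general
    (p : ℕ) [Fact p.Prime]
    (K E : Type) [Field K] [Field E]
    [Algebra ℚ_[p] K]
    [Algebra ℚ_[p] E] [FiniteDimensional ℚ_[p] E]
    [Algebra ℤ_[p] E] [IsScalarTower ℤ_[p] ℚ_[p] E]
    [Algebra K E] [IsScalarTower ℚ_[p] K E] [FiniteDimensional K E] [IsGalois K E]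
    (L : IntermediateField K E)
    (hdeg : ¬ (p ∣ Module.finrank K L))
    (N : Type) [CommGroup N] [Fintype N]
    (ι : N →* Equiv.Perm ((E ≃ₐ[K] E) ⧸ L.fixingSubgroup))
    (hcard : Nat.card N = Nat.card ((E ≃ₐ[K] E) ⧸ L.fixingSubgroup))
    (htrans : ∀ x y : (E ≃ₐ[K] E) ⧸ L.fixingSubgroup, ∃ n : N, ι n x = y)
    (c : (E ≃ₐ[K] E) →* MulAut N)
    (hc : ∀ (g : E ≃ₐ[K] E) (n : N),
      ι (c g n) = lam K E L g * ι n * (lam K E L g)⁻¹) :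
    AH p K E L N ι c = OEN p K E N c ∧ AH p K E L N ι c = MaxOrd p K E N c := by
  have hp : ¬ p ∣ Fintype.card N := by
    rwa [← Nat.card_eq_fintype_card, hcard, ← Subgroup.index_eq_card,
      ← IntermediateField.finrank_eq_fixingSubgroup_index]
  have hAM := AH_subset_MaxOrd (p := p) hcard htrans hc
  have hMO := MaxOrd_subset_OEN c hp
  have hOA := OEN_subset_AH (p := p) hc
  exact ⟨(hAM.trans hMO).antisymm hOA, hAM.antisymm (hMO.trans hOA)⟩

/-- if `p ∤ [L:K]` then `A_H = O_E[N]^G`, and this is the unique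
maximal `O_K`-order in `H` (the integral closure of `O_K` in `H`). -/
theorem statement9
    (p : ℕ) [Fact p.Prime]
    (K E : Type) [Field K] [Field E]
    [Algebra ℚ_[p] K] [FiniteDimensional ℚ_[p] K]
    [Algebra ℚ_[p] E] [FiniteDimensional ℚ_[p] E]
    [Algebra ℤ_[p] E] [IsScalarTower ℤ_[p] ℚ_[p] E]
    [Algebra K E] [IsScalarTower ℚ_[p] K E] [FiniteDimensional K E] [IsGalois K E]
    (L : IntermediateField K E)
    (hclosure : IntermediateField.normalClosure K L E = ⊤)
    (hdeg : ¬ (p ∣ Module.finrank K L))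
    (N : Type) [CommGroup N] [Fintype N]
    (ι : N →* Equiv.Perm ((E ≃ₐ[K] E) ⧸ L.fixingSubgroup))
    (hι : Function.Injective ι)
    (hcard : Nat.card N = Nat.card ((E ≃ₐ[K] E) ⧸ L.fixingSubgroup))
    (htrans : ∀ x y : (E ≃ₐ[K] E) ⧸ L.fixingSubgroup, ∃ n : N, ι n x = y)
    (c : (E ≃ₐ[K] E) →* MulAut N)
    (hc : ∀ (g : E ≃ₐ[K] E) (n : N),
      ι (c g n) = lam K E L g * ι n * (lam K E L g)⁻¹) :
    AH p K E L N ι c = OEN p K E N c ∧ AH p K E L N ι c = MaxOrd p K E N c :=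
  statement9_general p K E L hdeg N ι hcard htrans c hc
end
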